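/- Let k ≥ 2, p ≥ k and q ≥ p be integers and let I be a maximization instance of k CSP-q with n variables and opt(I) ≠ wor(I) in which every constraint function belongs to E_q. Then max{v(I,x) : x ∈ Σ_q^n whose coordinates take at most p pairwise distinct values} ≥ γ_E(q,p,k)·opt(I) + (1 − γ_E(q,p,k))·wor(I); that is, the best solutions among those whose coordinates take at most p distinct values are γ_E(q,p,k)-differential approximate on I. -/

import Mathlib

/-!
Take an optimal solution `x*` and a pair `(Ψ, Φ) ∈ Γ_E(R, R*, q, p, k)`, and compose `x*` with
every row of both arrays. The solutions `Ψ_r ∘ x*` take at most `p` values. Each constraint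
function is shift invariant and reads at most `k ≤ q` coordinates, so condition (iii) makes
`∑_r v(I, Ψ_r ∘ x*) = ∑_r v(I, Φ_r ∘ x*)`. A shift row `Φ_r` turns `x*` into a shift of
itself, which is again optimal, and every other row still gives at least `wor(I)`. Hence
`R · best ≥ R* · opt(I) + (R - R*) · wor(I)`, and the supremum over `R*/R` gives the bound.
-/

/-- An instance of the (maximization) problem `k CSP-q` with `n` variables:
`m` weighted constraints, where constraint `i` has positive weight `w i`,
arity `arity i ≤ k`, a strictly increasing tuple `idx i` of indices of the
variables it depends on, and a constraint function `P i : Σ_q^{arity i} → ℝ`. -/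
structure CSPInstance (q k n : ℕ) where
  m : ℕ
  w : Fin m → ℝ
  w_pos : ∀ i, 0 < w i
  arity : Fin m → ℕ
  arity_le : ∀ i, arity i ≤ k
  idx : (i : Fin m) → Fin (arity i) → Fin n
  idx_mono : ∀ i, StrictMono (idx i)
  P : (i : Fin m) → ((Fin (arity i) → Fin q) → ℝ)

namespace CSPInstance

variable {q k n : ℕ}

/-- The objective value `v(I, x)` of a solution `x ∈ Σ_q^n`. -/
def value (I : CSPInstance q k n) (x : Fin n → Fin q) : ℝ :=
  ∑ i : Fin I.m, I.w i * I.P i (fun s => x (I.idx i s))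

/-- `opt(I)`, the best (maximum) objective value. -/
noncomputable def opt (I : CSPInstance q k n) : ℝ := sSup (Set.range I.value)

/-- `wor(I)`, the worst (minimum) objective value. -/
noncomputable def wor (I : CSPInstance q k n) : ℝ := sInf (Set.range I.value)

/-- `E[v(I,X)]`, the average objective value over all `q^n` solutions. -/
noncomputable def avg (I : CSPInstance q k n) : ℝ :=
  (∑ x : Fin n → Fin q, I.value x) / (q : ℝ) ^ n

/-- A strong coloring of `I` with `ν` colors: an assignment of colors to variables such
that the support of each constraint meets each color class in at most one index. -/
def StrongColoring (I : CSPInstance q k n) (ν : ℕ) : Prop :=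
  ∃ c : Fin n → Fin ν, ∀ i : Fin I.m, Function.Injective (fun s => c (I.idx i s))

end CSPInstance

/-- A function `P : Σ_q^κ → ℝ` belongs to the family `E_q` if it is invariant under a
uniform shift of all its inputs (addition is componentwise mod `q`). -/
def MemE (q : ℕ) {κ : ℕ} (P : (Fin κ → Fin q) → ℝ) : Prop :=
  ∀ (y : Fin κ → Fin q) (a : Fin q), P (fun s => y s + a) = P y

/-- `(Ψ, Φ)` is a relaxed `(q,p)`-alphabet reduction pair of arrays of strength `k`:
both arrays have `R` rows, `q` columns indexed by `Σ_q` and entries in `Σ_q`;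
`Φ` contains at least one row of the form `(a, 1+a, ..., q−1+a)` (mod `q`) for some
`a ∈ Σ_q`; every row of `Ψ` takes at most `p` pairwise distinct values; and for every `k`
pairwise distinct columns and every `v ∈ Σ_q^k`, `Ψ` and `Φ` have the same number of rows
whose restriction to these columns lies in `{v + a·𝟏 : a ∈ Σ_q}`. -/
def IsRelaxedARPA (q p k R : ℕ) (Ψ Φ : Fin R → Fin q → Fin q) : Prop :=
  (∃ r, ∃ a : Fin q, ∀ j : Fin q, Φ r j = j + a) ∧
  (∀ r, (Finset.univ.image (Ψ r)).card ≤ p) ∧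
  (∀ c : Fin k → Fin q, StrictMono c → ∀ v : Fin k → Fin q,
    (Finset.univ.filter fun r => ∃ a : Fin q, ∀ s, Ψ r (c s) = v s + a).card =
      (Finset.univ.filter fun r => ∃ a : Fin q, ∀ s, Φ r (c s) = v s + a).card)

/-- `Γ_E(R, R*, q, p, k)` is nonempty: there is a relaxed `(q,p)`-ARPA of strength `k`
with `R` rows in which rows of the form `(a, 1+a, ..., q−1+a)`, `a ∈ Σ_q`, occur `R*`
times in total in `Φ`. -/
def GammaENonempty (R Rstar q p k : ℕ) : Prop :=
  ∃ Ψ Φ : Fin R → Fin q → Fin q, IsRelaxedARPA q p k R Ψ Φ ∧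
    (Finset.univ.filter fun r => ∃ a : Fin q, ∀ j : Fin q, Φ r j = j + a).card = Rstar

/-- `γ_E(q,p,k)`: the supremum of `R*/R` over all integers `R ≥ R* > 0` such that
`Γ_E(R, R*, q, p, k)` is nonempty. -/
noncomputable def gammaE (q p k : ℕ) : ℝ :=
  sSup {x : ℝ | ∃ R Rstar : ℕ, 0 < Rstar ∧ Rstar ≤ R ∧ GammaENonempty R Rstar q p k ∧
    x = (Rstar : ℝ) / R}

section OrbitCounting

open Finset

variable {q : ℕ}

def orbitCount {R k : ℕ} (A : Fin R → Fin q → Fin q) (c v : Fin k → Fin q) : ℕ :=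
  #{r | ∃ a : Fin q, ∀ s, A r (c s) = v s + a}

def SameOrbitCounts (k : ℕ) {R : ℕ} (Ψ Φ : Fin R → Fin q → Fin q) : Prop :=
  ∀ c : Fin k → Fin q, StrictMono c → ∀ v, orbitCount Ψ c v = orbitCount Φ c v

lemma IsRelaxedARPA.sameOrbitCounts {p k R : ℕ} {Ψ Φ : Fin R → Fin q → Fin q}
    (h : IsRelaxedARPA q p k R Ψ Φ) : SameOrbitCounts k Ψ Φ :=
  h.2.2

lemma MemE.comp {κ μ : ℕ} {P : (Fin κ → Fin q) → ℝ} (hP : MemE q P) (g : Fin κ → Fin μ) :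
    MemE q fun z : Fin μ → Fin q => P fun s => z (g s) :=
  fun y a => hP (fun s => y (g s)) a

lemma MemE.sum_orbit [NeZero q] {k : ℕ} (hk : 0 < k) {f : (Fin k → Fin q) → ℝ}
    (hf : MemE q f) (w : Fin k → Fin q) :
    ∑ v with ∃ a : Fin q, ∀ s, w s = v s + a, f v = q * f w := by
  have horbit : ({v | ∃ a : Fin q, ∀ s, w s = v s + a} : Finset (Fin k → Fin q)) =
      univ.image fun a s => w s - a := by
    ext v
    simp only [mem_filter, mem_univ, true_and, mem_image, funext_iff, sub_eq_iff_eq_add]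
  have hinj : Function.Injective fun (a : Fin q) (s : Fin k) => w s - a :=
    fun a b hab => sub_right_injective (congrFun hab ⟨0, hk⟩)
  rw [horbit, sum_image fun a _ b _ hab => hinj hab]
  have hshift : ∀ a, f (fun s => w s - a) = f w := fun a => by
    simpa only [sub_add_cancel] using (hf (fun s => w s - a) a).symm
  simp only [hshift, sum_const, card_univ, Fintype.card_fin, nsmul_eq_mul]

lemma MemE.card_mul_sum_rows [NeZero q] {k R : ℕ} (hk : 0 < k) {f : (Fin k → Fin q) → ℝ}
    (hf : MemE q f) (A : Fin R → Fin q → Fin q) (c : Fin k → Fin q) :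
    (q : ℝ) * ∑ r, f (fun s => A r (c s)) = ∑ v, (orbitCount A c v : ℝ) * f v := by
  simp only [mul_sum, ← hf.sum_orbit hk, sum_filter]
  rw [sum_comm]
  refine sum_congr rfl fun v _ => ?_
  rw [← sum_filter, sum_const, nsmul_eq_mul, orbitCount]

lemma MemE.sum_rows_eq_of_orbitCount_eq [NeZero q] {k R : ℕ} (hk : 0 < k)
    {f : (Fin k → Fin q) → ℝ} (hf : MemE q f) {A A' : Fin R → Fin q → Fin q}
    {c : Fin k → Fin q} (h : ∀ v, orbitCount A c v = orbitCount A' c v) :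
    ∑ r, f (fun s => A r (c s)) = ∑ r, f (fun s => A' r (c s)) := by
  refine mul_left_cancel₀ (Nat.cast_ne_zero.2 (NeZero.ne q)) ?_
  simp only [hf.card_mul_sum_rows hk, h]

lemma exists_strictMono_factorization {κ k : ℕ} (hκ : κ ≤ k) (hkq : k ≤ q)
    (u : Fin κ → Fin q) :
    ∃ c : Fin k → Fin q, StrictMono c ∧ ∃ g : Fin κ → Fin k, ∀ s, c (g s) = u s := by
  obtain ⟨T, hsub, -, hcard⟩ := exists_subsuperset_card_eq (subset_univ (univ.image u))
    (card_image_le.trans (by simpa using hκ)) (by simpa using hkq)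
  refine ⟨T.orderEmbOfFin hcard, (T.orderEmbOfFin hcard).strictMono, ?_⟩
  have hmem : ∀ s, u s ∈ Set.range (T.orderEmbOfFin hcard) := fun s => by
    rw [range_orderEmbOfFin]
    exact hsub (mem_image_of_mem u (mem_univ s))
  choose g hg using hmem
  exact ⟨g, hg⟩

/-- The columns read by `u` extend to `k` strictly increasing ones, through which `P` factors. -/
lemma SameOrbitCounts.sum_rows_eq {k R κ : ℕ} {Ψ Φ : Fin R → Fin q → Fin q}
    (h : SameOrbitCounts k Ψ Φ) (hk : 0 < k) (hkq : k ≤ q) (hκ : κ ≤ k)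
    {P : (Fin κ → Fin q) → ℝ} (hP : MemE q P) (u : Fin κ → Fin q) :
    ∑ r, P (fun s => Ψ r (u s)) = ∑ r, P (fun s => Φ r (u s)) := by
  have : NeZero q := ⟨by omega⟩
  obtain ⟨c, hc, g, hg⟩ := exists_strictMono_factorization hκ hkq u
  simpa only [hg] using (hP.comp g).sum_rows_eq_of_orbitCount_eq hk (h c hc)

lemma Finset.card_image_univ_comp_le {α β γ : Type*} [Fintype α] [Fintype β] [DecidableEq γ]
    (f : β → γ) (x : α → β) : #(univ.image fun a => f (x a)) ≤ #(univ.image f) :=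
  card_le_card fun _ hb =>
    let ⟨a, _, ha⟩ := mem_image.1 hb
    mem_image.2 ⟨x a, mem_univ _, ha⟩

end OrbitCounting

lemma Real.add_sSup_mul_le {S : Set ℝ} {a b d : ℝ} (hd : 0 ≤ d) (hab : a ≤ b)
    (h : ∀ x ∈ S, a + x * d ≤ b) : a + sSup S * d ≤ b := by
  rcases hd.eq_or_lt with rfl | hd
  · simpa using hab
  have hS : sSup S ≤ (b - a) / d :=
    Real.sSup_le (fun x hx => by rw [le_div_iff₀ hd]; linarith [h x hx])
      (div_nonneg (by linarith) hd.le)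
  rw [le_div_iff₀ hd] at hS
  linarith

namespace CSPInstance

open Finset

variable {q k n : ℕ} (I : CSPInstance q k n)

def fewValuedValues (p : ℕ) : Set ℝ :=
  {x | ∃ y : Fin n → Fin q, #(univ.image y) ≤ p ∧ x = I.value y}

lemma value_le_sSup_fewValuedValues {p : ℕ} {y : Fin n → Fin q} (hy : #(univ.image y) ≤ p) :
    I.value y ≤ sSup (I.fewValuedValues p) := by
  refine le_csSup ((Set.finite_range I.value).subset ?_).bddAbove ⟨y, hy, rfl⟩
  rintro _ ⟨y, -, rfl⟩
  exact ⟨y, rfl⟩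

lemma wor_le_value (x : Fin n → Fin q) : I.wor ≤ I.value x :=
  csInf_le (Set.finite_range _).bddBelow ⟨x, rfl⟩

lemma exists_value_eq_opt [NeZero q] : ∃ x, I.value x = I.opt :=
  (Set.range_nonempty _).csSup_mem (Set.finite_range _)

lemma wor_le_opt [NeZero q] : I.wor ≤ I.opt := by
  obtain ⟨x, hx⟩ := I.exists_value_eq_opt
  exact hx ▸ I.wor_le_value x

variable {I}

lemma value_shift (hEq : ∀ i, MemE q (I.P i)) (x : Fin n → Fin q) (a : Fin q) :
    I.value (fun v => x v + a) = I.value x :=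
  sum_congr rfl fun i _ => congrArg (I.w i * ·) (hEq i _ a)

lemma sum_value_rows_eq {R : ℕ} {Ψ Φ : Fin R → Fin q → Fin q} (hEq : ∀ i, MemE q (I.P i))
    (h : SameOrbitCounts k Ψ Φ) (hk : 0 < k) (hkq : k ≤ q) (x : Fin n → Fin q) :
    ∑ r, I.value (fun v => Ψ r (x v)) = ∑ r, I.value (fun v => Φ r (x v)) := by
  simp only [value]
  rw [sum_comm, sum_comm (s := univ (α := Fin R))]
  refine sum_congr rfl fun i _ => ?_
  rw [← mul_sum, ← mul_sum, h.sum_rows_eq hk hkq (I.arity_le i) (hEq i)]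

lemma card_shiftRows_mul_add_le_sum_value {R : ℕ} (hEq : ∀ i, MemE q (I.P i))
    (Φ : Fin R → Fin q → Fin q) (x : Fin n → Fin q) :
    (#{r | ∃ a : Fin q, ∀ j, Φ r j = j + a} : ℝ) * I.value x +
        (R - #{r | ∃ a : Fin q, ∀ j, Φ r j = j + a}) * I.wor ≤
      ∑ r, I.value (fun v => Φ r (x v)) := by
  have hcard : (R : ℝ) - #{r | ∃ a : Fin q, ∀ j, Φ r j = j + a} =
      #{r | ¬∃ a : Fin q, ∀ j, Φ r j = j + a} := by
    rw [sub_eq_iff_eq_add', ← Nat.cast_add, card_filter_add_card_filter_not, card_univ,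
      Fintype.card_fin]
  have hshift : ∀ r ∈ ({r | ∃ a : Fin q, ∀ j, Φ r j = j + a} : Finset (Fin R)),
      I.value (fun v => Φ r (x v)) = I.value x := fun r hr => by
    obtain ⟨a, ha⟩ := (mem_filter.1 hr).2
    simp only [ha, value_shift hEq]
  rw [← sum_filter_add_sum_filter_not univ (fun r => ∃ a : Fin q, ∀ j, Φ r j = j + a),
    sum_congr rfl hshift, sum_const, nsmul_eq_mul, hcard]
  gcongr
  simpa only [nsmul_eq_mul] using card_nsmul_le_sum _ _ _ fun r _ => I.wor_le_value _

lemma sum_value_rows_le_sSup_fewValuedValues {p R : ℕ} {Ψ : Fin R → Fin q → Fin q}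
    (hΨ : ∀ r, #(univ.image (Ψ r)) ≤ p) (x : Fin n → Fin q) :
    ∑ r, I.value (fun v => Ψ r (x v)) ≤ R * sSup (I.fewValuedValues p) := by
  simpa using sum_le_card_nsmul univ _ _ fun r _ =>
    I.value_le_sSup_fewValuedValues ((card_image_univ_comp_le (Ψ r) x).trans (hΨ r))

lemma wor_add_div_mul_le_sSup_fewValuedValues {p R Rstar : ℕ} (hEq : ∀ i, MemE q (I.P i))
    (hk : 0 < k) (hkq : k ≤ q) (hΓ : GammaENonempty R Rstar q p k) :
    I.wor + Rstar / R * (I.opt - I.wor) ≤ sSup (I.fewValuedValues p) := by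
  obtain ⟨Ψ, Φ, hΨΦ, hRstar⟩ := hΓ
  have : NeZero q := ⟨by omega⟩
  obtain ⟨x, hx⟩ := I.exists_value_eq_opt
  obtain ⟨r, -⟩ := hΨΦ.1
  have hR : (0 : ℝ) < R := Nat.cast_pos.2 r.pos
  have hsum : Rstar * I.opt + (R - Rstar) * I.wor ≤ R * sSup (I.fewValuedValues p) :=
    calc Rstar * I.opt + (R - Rstar) * I.wor ≤ ∑ r, I.value (fun v => Φ r (x v)) := by
          simpa only [hRstar, hx] using card_shiftRows_mul_add_le_sum_value hEq Φ x
      _ = ∑ r, I.value (fun v => Ψ r (x v)) :=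
          (sum_value_rows_eq hEq hΨΦ.sameOrbitCounts hk hkq x).symm
      _ ≤ R * sSup (I.fewValuedValues p) := sum_value_rows_le_sSup_fewValuedValues hΨΦ.2.1 x
  rw [← sub_nonneg]
  have hdiff : sSup (I.fewValuedValues p) - (I.wor + Rstar / R * (I.opt - I.wor)) =
      (R * sSup (I.fewValuedValues p) - (Rstar * I.opt + (R - Rstar) * I.wor)) / R := by
    field_simp
    ring
  rw [hdiff]
  exact div_nonneg (by linarith) hR.le

end CSPInstance

theorem best_few_values_solution_diff_apx_Eq_general
    (q p k n : ℕ) (hk : 2 ≤ k) (hpk : k ≤ p) (hqp : p ≤ q)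
    (I : CSPInstance q k n)
    (hEq : ∀ i : Fin I.m, MemE q (I.P i)) :
    gammaE q p k * I.opt + (1 - gammaE q p k) * I.wor ≤
      sSup {x : ℝ | ∃ y : Fin n → Fin q,
        (Finset.univ.image y).card ≤ p ∧ x = I.value y} := by
  have : NeZero q := ⟨by omega⟩
  have hconst : (Finset.univ.image fun _ : Fin n => (0 : Fin q)).card ≤ p :=
    (Finset.card_le_one.2 (by simp)).trans (by omega)
  calc gammaE q p k * I.opt + (1 - gammaE q p k) * I.wor
        = I.wor + gammaE q p k * (I.opt - I.wor) := by ring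
    _ ≤ sSup (I.fewValuedValues p) :=
      Real.add_sSup_mul_le (sub_nonneg.2 I.wor_le_opt)
        ((I.wor_le_value _).trans (I.value_le_sSup_fewValuedValues hconst))
        fun _ ⟨_, _, _, _, hΓ, hx⟩ =>
          hx ▸ I.wor_add_div_mul_le_sSup_fewValuedValues hEq (by omega) (by omega) hΓ

/-- Let `k ≥ 2`, `p ≥ k`, `q ≥ p`, and let `I` be a maximization
instance of `k CSP-q` with `opt(I) ≠ wor(I)` whose constraint functions all belong to
`E_q`. Then the best objective value over solutions whose coordinates take at most `p`
pairwise distinct values is at least `γ_E(q,p,k)·opt(I) + (1 − γ_E(q,p,k))·wor(I)`. -/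
theorem best_few_values_solution_diff_apx_Eq
    (q p k n : ℕ) (hk : 2 ≤ k) (hpk : k ≤ p) (hqp : p ≤ q)
    (I : CSPInstance q k n) (hne : I.opt ≠ I.wor)
    (hEq : ∀ i : Fin I.m, MemE q (I.P i)) :
    gammaE q p k * I.opt + (1 - gammaE q p k) * I.wor ≤
      sSup {x : ℝ | ∃ y : Fin n → Fin q,
        (Finset.univ.image y).card ≤ p ∧ x = I.value y} :=
  best_few_values_solution_diff_apx_Eq_general q p k n hk hpk hqp I hEq
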